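/- Let l be an order bounded linear functional on a Riesz space X with positive part l₊ ≠ 0 and negative part l₋ ≠ 0. Then the kernel of l is a Grothendieck subspace of X if and only if both l₊ and l₋ are Riesz homomorphisms on X. -/

import Mathlib

variable {X : Type*} [Lattice X] [AddCommGroup X]
  [CovariantClass X X (· + ·) (· ≤ ·)] [Module ℝ X] [PosSMulMono ℝ X]

/-- A Grothendieck subspace: closed under `x ⊔ y ⊔ 0 + x ⊓ y ⊓ 0`. -/
def IsGrothendieckSubspace (H : Submodule ℝ X) : Prop :=
  ∀ x ∈ H, ∀ y ∈ H, x ⊔ y ⊔ 0 + x ⊓ y ⊓ 0 ∈ H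

/-- A Riesz subspace: closed under the lattice operations. -/
def IsRieszSubspace (H : Submodule ℝ X) : Prop :=
  ∀ x ∈ H, ∀ y ∈ H, x ⊔ y ∈ H ∧ x ⊓ y ∈ H

/-- A Riesz homomorphism: a linear map preserving finite suprema. -/
def IsRieszHom (f : X →ₗ[ℝ] ℝ) : Prop :=
  ∀ x y : X, f (x ⊔ y) = f x ⊔ f y

/-- A positive linear functional. -/
def IsPositive (f : X →ₗ[ℝ] ℝ) : Prop :=
  ∀ x : X, 0 ≤ x → 0 ≤ f x

/-- `p` is the positive part of the order bounded functional `l`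
(so `l₋ = p - l` and `|l| = p + (p - l)`). -/
def IsPosPartOf (l p : X →ₗ[ℝ] ℝ) : Prop :=
  IsPositive p ∧ IsPositive (p - l) ∧
    ∀ x : X, 0 ≤ x → p x = sSup {r : ℝ | ∃ y : X, 0 ≤ y ∧ y ≤ x ∧ l y = r}

/-! If `ker l` is a Grothendieck subspace, it contains `x ⊔ y` for all positive `x, y` in it.
Disjoint `a, b ≥ 0` with `l a = l b = 1` and `c ≥ 0` with `l c = -1` would give such `x = a + c`,
`y = b + c` with `l (x ⊔ y) = l (a + b + c) = 1`. Since `l₊ a > 0` yields some `0 ≤ a' ≤ a` with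
`l a' > 0`, and `l₋ ≠ 0` yields some `c ≥ 0` with `l c < 0`, the positive functional `l₊` cannot
be positive on two disjoint elements, which makes it a Riesz homomorphism; the same argument
applied to `-l` handles `l₋`. Conversely, if `l₊` and `l₋` are Riesz homomorphisms, they agree on
`ker l` and hence on `x ⊔ y ⊔ 0 + x ⊓ y ⊓ 0` for `x, y ∈ ker l`. -/

section Lattice

variable {E : Type*} [Lattice E] [AddCommGroup E] [Module ℝ E]

theorem IsGrothendieckSubspace.sup_mem {H : Submodule ℝ E} (hH : IsGrothendieckSubspace H)
    {x y : E} (hx : x ∈ H) (hy : y ∈ H) (hx0 : 0 ≤ x) (hy0 : 0 ≤ y) : x ⊔ y ∈ H := by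
  have h := hH x hx y hy
  rwa [sup_eq_left.mpr (hx0.trans le_sup_left), inf_eq_right.mpr (le_inf hx0 hy0),
    add_zero] at h

theorem IsPosPartOf.exists_lt_apply {l p : E →ₗ[ℝ] ℝ} (hp : IsPosPartOf l p) {x : E}
    (hx : 0 ≤ x) {c : ℝ} (hc : c < p x) : ∃ y, 0 ≤ y ∧ y ≤ x ∧ c < l y := by
  rw [hp.2.2 x hx] at hc
  have hne : {r : ℝ | ∃ y : E, 0 ≤ y ∧ y ≤ x ∧ l y = r}.Nonempty := ⟨0, 0, le_rfl, hx, map_zero l⟩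
  obtain ⟨_, ⟨y, hy0, hyx, rfl⟩, hcy⟩ := exists_lt_of_lt_csSup hne hc
  exact ⟨y, hy0, hyx, hcy⟩

end Lattice

section OrderedGroup

variable {E : Type*} [Lattice E] [AddCommGroup E] [AddLeftMono E] [Module ℝ E]

theorem IsPosPartOf.exists_apply_neg {l p : E →ₗ[ℝ] ℝ} (hp : IsPosPartOf l p) {x : E}
    (hx : 0 ≤ x) (hqx : 0 < (p - l) x) : ∃ y, 0 ≤ y ∧ y ≤ x ∧ l y < 0 := by
  obtain ⟨y, hy0, hyx, hly⟩ := hp.exists_lt_apply hx (c := l x) (by simpa using hqx)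
  exact ⟨x - y, sub_nonneg.mpr hyx, sub_le_self x hy0, by simpa using hly⟩

theorem IsPositive.exists_pos_of_ne_zero {f : E →ₗ[ℝ] ℝ} (hf : IsPositive f) (h : f ≠ 0) :
    ∃ x, 0 ≤ x ∧ 0 < f x := by
  by_contra! hle
  refine h (LinearMap.ext fun z => ?_)
  have hpos := le_antisymm (hle _ (posPart_nonneg z)) (hf _ (posPart_nonneg z))
  have hneg := le_antisymm (hle _ (negPart_nonneg z)) (hf _ (negPart_nonneg z))
  rw [← posPart_sub_negPart z, map_sub, hpos, hneg, sub_zero, LinearMap.zero_apply]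

theorem IsPositive.isRieszHom_of_disjoint {f : E →ₗ[ℝ] ℝ} (hf : IsPositive f)
    (hd : ∀ a b : E, 0 ≤ a → 0 ≤ b → a ⊓ b = 0 → f a = 0 ∨ f b = 0) : IsRieszHom f := by
  have hposPart (z : E) : f z⁺ = f z ⊔ 0 := by
    have hz : f z = f z⁺ - f z⁻ := by rw [← map_sub, posPart_sub_negPart]
    have hpos := hf _ (posPart_nonneg z)
    have hneg := hf _ (negPart_nonneg z)
    rcases hd _ _ (posPart_nonneg z) (negPart_nonneg z) (posPart_inf_negPart_eq_zero z) with h | h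
    · rw [h, eq_comm, sup_eq_right]; linarith
    · rw [hz, h, sub_zero, eq_comm, sup_eq_left.mpr hpos]
  intro x y
  rw [sup_eq_add_posPart_sub, map_add, hposPart, map_sub, sup_eq_add_posPart_sub (f x)]
  rfl

theorem IsRieszHom.map_inf {f : E →ₗ[ℝ] ℝ} (hf : IsRieszHom f) (x y : E) :
    f (x ⊓ y) = f x ⊓ f y := by
  rw [← neg_neg (x ⊓ y), neg_inf, map_neg, hf, map_neg, map_neg, ← neg_inf, neg_neg]

theorem IsRieszHom.map_grothendieck {f : E →ₗ[ℝ] ℝ} (hf : IsRieszHom f) (x y : E) :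
    f (x ⊔ y ⊔ 0 + x ⊓ y ⊓ 0) = f x ⊔ f y ⊔ 0 + f x ⊓ f y ⊓ 0 := by
  rw [map_add, hf, hf, hf.map_inf, hf.map_inf, map_zero]

theorem isGrothendieckSubspace_ker_sub {f g : E →ₗ[ℝ] ℝ} (hf : IsRieszHom f)
    (hg : IsRieszHom g) : IsGrothendieckSubspace (LinearMap.ker (f - g)) := by
  intro x hx y hy
  simp only [LinearMap.mem_ker, LinearMap.sub_apply, sub_eq_zero] at hx hy ⊢
  rw [hf.map_grothendieck, hg.map_grothendieck, hx, hy]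

theorem IsGrothendieckSubspace.apply_ne_neg_one_of_ker {l : E →ₗ[ℝ] ℝ}
    (hG : IsGrothendieckSubspace (LinearMap.ker l)) {a b c : E} (ha : 0 ≤ a) (hb : 0 ≤ b)
    (hc : 0 ≤ c) (hab : a ⊓ b = 0) (hla : l a = 1) (hlb : l b = 1) : l c ≠ -1 := by
  intro hlc
  have hx : a + c ∈ LinearMap.ker l := by simp [hla, hlc]
  have hy : b + c ∈ LinearMap.ker l := by simp [hlb, hlc]
  have hsup : (a + c) ⊔ (b + c) = a + b + c := by
    rw [← sup_add, ← inf_add_sup a b, hab, zero_add]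
  have h := hG.sup_mem hx hy (add_nonneg ha hc) (add_nonneg hb hc)
  rw [hsup, LinearMap.mem_ker] at h
  norm_num [hla, hlb, hlc] at h

variable [PosSMulMono ℝ E]

theorem smul_inf_smul_eq_zero {a b : E} (ha : 0 ≤ a) (hb : 0 ≤ b) (hab : a ⊓ b = 0)
    {s t : ℝ} (hs : 0 ≤ s) (ht : 0 ≤ t) : s • a ⊓ t • b = 0 := by
  have hr : 0 < s + t + 1 := by linarith
  have hmono {u v : ℝ} {z : E} (huv : u ≤ v) (hz : 0 ≤ z) : u • z ≤ v • z :=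
    sub_nonneg.mp (sub_smul v u z ▸ smul_nonneg (sub_nonneg.mpr huv) hz)
  refine le_antisymm ?_ (le_inf (smul_nonneg hs ha) (smul_nonneg ht hb))
  calc s • a ⊓ t • b ≤ (s + t + 1) • a ⊓ (s + t + 1) • b :=
        inf_le_inf (hmono (by linarith) ha) (hmono (by linarith) hb)
    _ = (s + t + 1) • (a ⊓ b) := ((OrderIso.smulRight hr).map_inf a b).symm
    _ = 0 := by rw [hab, smul_zero]

theorem IsGrothendieckSubspace.apply_nonneg_of_ker {l : E →ₗ[ℝ] ℝ}
    (hG : IsGrothendieckSubspace (LinearMap.ker l)) {a b c : E} (ha : 0 ≤ a) (hb : 0 ≤ b)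
    (hc : 0 ≤ c) (hab : a ⊓ b = 0) (hla : 0 < l a) (hlb : 0 < l b) : 0 ≤ l c := by
  by_contra! hlc
  have hlc' : 0 < -l c := neg_pos.mpr hlc
  refine hG.apply_ne_neg_one_of_ker (smul_nonneg (inv_nonneg.mpr hla.le) ha)
    (smul_nonneg (inv_nonneg.mpr hlb.le) hb) (smul_nonneg (inv_nonneg.mpr hlc'.le) hc)
    (smul_inf_smul_eq_zero ha hb hab (inv_nonneg.mpr hla.le) (inv_nonneg.mpr hlb.le)) ?_ ?_ ?_
  · rw [map_smul, smul_eq_mul, inv_mul_cancel₀ hla.ne']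
  · rw [map_smul, smul_eq_mul, inv_mul_cancel₀ hlb.ne']
  · rw [map_smul, smul_eq_mul, inv_neg, neg_mul, inv_mul_cancel₀ hlc.ne]

theorem IsGrothendieckSubspace.isRieszHom_of_ker {l f : E →ₗ[ℝ] ℝ}
    (hG : IsGrothendieckSubspace (LinearMap.ker l)) (hc : ∃ c, 0 ≤ c ∧ l c < 0)
    (hf : IsPositive f) (hfl : ∀ x, 0 ≤ x → 0 < f x → ∃ y, 0 ≤ y ∧ y ≤ x ∧ 0 < l y) :
    IsRieszHom f := by
  refine hf.isRieszHom_of_disjoint fun a b ha hb hab => ?_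
  by_contra! hne
  obtain ⟨a', ha'0, ha'a, hla'⟩ := hfl a ha ((hf a ha).lt_of_ne' hne.1)
  obtain ⟨b', hb'0, hb'b, hlb'⟩ := hfl b hb ((hf b hb).lt_of_ne' hne.2)
  have hab' : a' ⊓ b' = 0 :=
    le_antisymm (hab ▸ inf_le_inf ha'a hb'b) (le_inf ha'0 hb'0)
  obtain ⟨c, hc0, hlc⟩ := hc
  exact hlc.not_ge (hG.apply_nonneg_of_ker ha'0 hb'0 hc0 hab' hla' hlb')

end OrderedGroup

theorem ker_grothendieck_iff_parts_riesz_homs (l p : X →ₗ[ℝ] ℝ)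
    (hp : IsPosPartOf l p) (hp0 : p ≠ 0) (hn0 : p - l ≠ 0) :
    IsGrothendieckSubspace (LinearMap.ker l) ↔
      IsRieszHom p ∧ IsRieszHom (p - l) := by
  constructor
  · intro hG
    constructor
    · obtain ⟨w, hw0, hqw⟩ := hp.2.1.exists_pos_of_ne_zero hn0
      obtain ⟨c, hc0, -, hlc⟩ := hp.exists_apply_neg hw0 hqw
      exact hG.isRieszHom_of_ker ⟨c, hc0, hlc⟩ hp.1 fun _ hx => hp.exists_lt_apply hx
    · have hG' : IsGrothendieckSubspace (LinearMap.ker (-l)) := (LinearMap.ker_neg l).symm ▸ hG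
      obtain ⟨w, hw0, hpw⟩ := hp.1.exists_pos_of_ne_zero hp0
      obtain ⟨c, hc0, -, hlc⟩ := hp.exists_lt_apply hw0 hpw
      refine hG'.isRieszHom_of_ker ⟨c, hc0, by simpa using hlc⟩ hp.2.1 fun x hx h => ?_
      obtain ⟨y, hy0, hyx, hly⟩ := hp.exists_apply_neg hx h
      exact ⟨y, hy0, hyx, by simpa using hly⟩
  · rintro ⟨hP, hN⟩
    simpa using isGrothendieckSubspace_ker_sub hP hN
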